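/- There is a short exact sequence 0 → H^1(N_0, D̄) → H^1(C, D) → ker(ρ_1)/B^1(C^{0,•}, D_{0,1}) → 0, where the first map is induced by inclusion of the null subcomplex N_0 into C and the second by the projection π_1 onto the (0,1)-component. -/

import Mathlib

open DirectSum

variable {R M : Type} [CommRing R] [AddCommGroup M] [Module R M]

/-- Projection `π_q` of a bigraded module onto the part of second degree `≥ q`,
along the bigrading. -/
noncomputable def bproj (𝒞 : ℤ × ℤ → Submodule R M) [DirectSum.Decomposition 𝒞] (q : ℤ) :
    M →ₗ[R] M :=
  (DirectSum.coeLinearMap 𝒞).comp <|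
    (DFinsupp.filterLinearMap R (fun pq : ℤ × ℤ => 𝒞 pq) (fun pq => q ≤ pq.2)).comp
      (DirectSum.decomposeLinearEquiv 𝒞).toLinearMap

/-- The bihomogeneous component of bidegree `(p, q)` of an element. -/
noncomputable def bcomp (𝒞 : ℤ × ℤ → Submodule R M) [DirectSum.Decomposition 𝒞] (p q : ℤ)
    (x : M) : M :=
  (DirectSum.decompose 𝒞 x (p, q) : M)

/-- The total-degree-`k` part `C^k = ⊕_{p+q=k} C^{p,q}`. -/
def bdeg (𝒞 : ℤ × ℤ → Submodule R M) (k : ℤ) : Submodule R M :=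
  ⨆ p : ℤ, 𝒞 (p, k - p)

/-- The part of second degree `q`, `⊕_p C^{p,q}`. -/
def brow (𝒞 : ℤ × ℤ → Submodule R M) (q : ℤ) : Submodule R M :=
  ⨆ p : ℤ, 𝒞 (p, q)

/-- The decreasing column filtration `F^p C = ⊕_{i ≥ p, j} C^{i,j}`. -/
def bfil (𝒞 : ℤ × ℤ → Submodule R M) (p : ℤ) : Submodule R M :=
  ⨆ (i : ℤ) (_ : p ≤ i) (j : ℤ), 𝒞 (i, j)

/-!
In total degrees `0` and `1` the first-quadrant condition leaves only `C⁰ = C^{0,0}` and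
`C¹ = C^{1,0} ⊕ C^{0,1}`, and `D₂₁` kills the bottom row. Splitting `D (a + b) = 0`
(`a ∈ C^{1,0}`, `b ∈ C^{0,1}`) into its components of bidegrees `(2,0)`, `(1,1)`, `(0,2)` shows
that `a + b` is a cycle iff `D₂₁ b + D₁₀ a = 0`, `D₀₁ a + D₁₀ b = 0` and `D₀₁ b = 0`: then
`b ∈ ker ρ₁` with `α_b = a`, and conversely `Y ∈ ker ρ₁` lifts to a cycle once `α` is corrected by a
`D̄`-primitive of the obstruction. A boundary `D w = D₁₀ w + D₀₁ w` lying in `C^{1,0}` has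
`D₀₁ w = 0`, which gives injectivity; and a cycle `a + D₀₁ w` differs by the boundary `-D w` from
`a - D₁₀ w`, which lies in `N₀` by the `(2,0)` and `(1,1)` components of `D² w = 0`.
-/

section Subquotient

variable {M₁ M₂ M₃ : Type} [AddCommGroup M₁] [Module R M₁] [AddCommGroup M₂] [Module R M₂]
  [AddCommGroup M₃] [Module R M₃]

noncomputable def subquotientMap {Z B : Submodule R M₁} {Z' B' : Submodule R M₂} (π : M₁ →ₗ[R] M₂)
    (hZ : ∀ x ∈ Z, π x ∈ Z') (hB : ∀ x ∈ B, π x ∈ B') :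
    (↥Z ⧸ B.comap Z.subtype) →ₗ[R] (↥Z' ⧸ B'.comap Z'.subtype) :=
  Submodule.mapQ _ _ (π.restrict hZ) fun x hx => hB x hx

variable {Z₁ B₁ : Submodule R M₁} {Z₂ B₂ : Submodule R M₂} {Z₃ B₃ : Submodule R M₃}

theorem subquotientMap_injective {π : M₁ →ₗ[R] M₂} (hZ : ∀ x ∈ Z₁, π x ∈ Z₂)
    (hB : ∀ x ∈ B₁, π x ∈ B₂) (h : ∀ x ∈ Z₁, π x ∈ B₂ → x ∈ B₁) :
    Function.Injective (subquotientMap π hZ hB) := by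
  refine (injective_iff_map_eq_zero _).2 fun c hc => ?_
  obtain ⟨⟨x, hx⟩, rfl⟩ := Submodule.Quotient.mk_surjective _ c
  exact (Submodule.Quotient.mk_eq_zero _).2
    (h x hx ((Submodule.Quotient.mk_eq_zero (B₂.comap Z₂.subtype)).1 hc))

theorem subquotientMap_surjective {π : M₁ →ₗ[R] M₂} (hZ : ∀ x ∈ Z₁, π x ∈ Z₂)
    (hB : ∀ x ∈ B₁, π x ∈ B₂) (h : ∀ y ∈ Z₂, ∃ x ∈ Z₁, π x = y) :
    Function.Surjective (subquotientMap π hZ hB) := by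
  intro c
  obtain ⟨⟨y, hy⟩, rfl⟩ := Submodule.Quotient.mk_surjective _ c
  obtain ⟨x, hx, rfl⟩ := h y hy
  exact ⟨Submodule.Quotient.mk ⟨x, hx⟩, rfl⟩

theorem range_subquotientMap_eq_ker {π₁ : M₁ →ₗ[R] M₂} {π₂ : M₂ →ₗ[R] M₃}
    (h₁Z : ∀ x ∈ Z₁, π₁ x ∈ Z₂) (h₁B : ∀ x ∈ B₁, π₁ x ∈ B₂)
    (h₂Z : ∀ y ∈ Z₂, π₂ y ∈ Z₃) (h₂B : ∀ y ∈ B₂, π₂ y ∈ B₃)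
    (hcomp : ∀ x ∈ Z₁, π₂ (π₁ x) ∈ B₃) (hexact : ∀ y ∈ Z₂, π₂ y ∈ B₃ → ∃ x ∈ Z₁, π₁ x - y ∈ B₂) :
    LinearMap.range (subquotientMap π₁ h₁Z h₁B) = LinearMap.ker (subquotientMap π₂ h₂Z h₂B) := by
  ext c
  constructor
  · rintro ⟨d, rfl⟩
    obtain ⟨⟨x, hx⟩, rfl⟩ := Submodule.Quotient.mk_surjective _ d
    exact (Submodule.Quotient.mk_eq_zero _).2 (hcomp x hx)
  · intro hc
    obtain ⟨⟨y, hy⟩, rfl⟩ := Submodule.Quotient.mk_surjective _ c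
    obtain ⟨x, hx, hxy⟩ := hexact y hy ((Submodule.Quotient.mk_eq_zero (B₃.comap Z₃.subtype)).1 hc)
    exact ⟨Submodule.Quotient.mk ⟨x, hx⟩, (Submodule.Quotient.eq _).2 hxy⟩

end Subquotient

theorem eq_zero_of_mem_of_mem {ι : Type*} [DecidableEq ι] (𝒜 : ι → Submodule R M)
    [Decomposition 𝒜] {i j : ι} (hij : i ≠ j) {x : M} (hi : x ∈ 𝒜 i) (hj : x ∈ 𝒜 j) : x = 0 :=
  Submodule.disjoint_def.1 ((Decomposition.isInternal 𝒜).submodule_iSupIndep.pairwiseDisjoint hij)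
    x hi hj

theorem add_add_eq_zero_iff_of_mem {ι : Type*} [DecidableEq ι] (𝒜 : ι → Submodule R M)
    [Decomposition 𝒜] {i j k : ι} (hij : i ≠ j) (hik : i ≠ k) (hjk : j ≠ k) {u v w : M}
    (hu : u ∈ 𝒜 i) (hv : v ∈ 𝒜 j) (hw : w ∈ 𝒜 k) :
    u + v + w = 0 ↔ u = 0 ∧ v = 0 ∧ w = 0 := by
  refine ⟨fun h => ?_, fun ⟨hu, hv, hw⟩ => by rw [hu, hv, hw, add_zero, add_zero]⟩
  have hcomp : ∀ l, (decompose 𝒜 u l : M) + decompose 𝒜 v l + decompose 𝒜 w l = 0 := fun l => by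
    simpa using congr_arg (fun x => (decompose 𝒜 x l : M)) h
  refine ⟨?_, ?_, ?_⟩
  · simpa [decompose_of_mem_same 𝒜 hu, decompose_of_mem_ne 𝒜 hv hij.symm,
      decompose_of_mem_ne 𝒜 hw hik.symm] using hcomp i
  · simpa [decompose_of_mem_same 𝒜 hv, decompose_of_mem_ne 𝒜 hu hij,
      decompose_of_mem_ne 𝒜 hw hjk.symm] using hcomp j
  · simpa [decompose_of_mem_same 𝒜 hw, decompose_of_mem_ne 𝒜 hu hik,
      decompose_of_mem_ne 𝒜 hv hjk] using hcomp k

section Bigraded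

variable {𝒞 : ℤ × ℤ → Submodule R M}

theorem bdeg_zero (h : ∀ p q : ℤ, p < 0 ∨ q < 0 → 𝒞 (p, q) = ⊥) : bdeg 𝒞 0 = 𝒞 (0, 0) := by
  refine le_antisymm (iSup_le fun p => ?_) (le_iSup_of_le 0 (by simp))
  rcases eq_or_ne p 0 with rfl | hp
  · simp
  · rw [h p (0 - p) (by omega)]; exact bot_le

theorem bdeg_one (h : ∀ p q : ℤ, p < 0 ∨ q < 0 → 𝒞 (p, q) = ⊥) :
    bdeg 𝒞 1 = 𝒞 (1, 0) ⊔ 𝒞 (0, 1) := by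
  refine le_antisymm (iSup_le fun p => ?_) (sup_le (le_iSup_of_le 1 (by simp))
    (le_iSup_of_le 0 (by simp)))
  rcases eq_or_ne p 1 with rfl | hp1
  · simp
  rcases eq_or_ne p 0 with rfl | hp0
  · simp
  · rw [h p (1 - p) (by omega)]; exact bot_le

theorem exists_add_of_mem_bdeg_one (h : ∀ p q : ℤ, p < 0 ∨ q < 0 → 𝒞 (p, q) = ⊥) {x : M}
    (hx : x ∈ bdeg 𝒞 1) : ∃ a ∈ 𝒞 (1, 0), ∃ b ∈ 𝒞 (0, 1), a + b = x := by
  rwa [bdeg_one h, Submodule.mem_sup] at hx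

variable [Decomposition 𝒞]

theorem bproj_of_mem {p q : ℤ} {x : M} (hx : x ∈ 𝒞 (p, q)) (r : ℤ) :
    bproj 𝒞 r x = if r ≤ q then x else 0 := by
  change coeLinearMap 𝒞 (DFinsupp.filter (fun pq : ℤ × ℤ => r ≤ pq.2) (decompose 𝒞 x)) = _
  rw [decompose_of_mem 𝒞 hx, DirectSum.of, DFinsupp.singleAddHom_apply, DFinsupp.filter_single]
  split_ifs
  · exact coeLinearMap_of 𝒞 _ _
  · exact map_zero _

theorem bproj_one_add {a b : M} (ha : a ∈ 𝒞 (1, 0)) (hb : b ∈ 𝒞 (0, 1)) :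
    bproj 𝒞 1 (a + b) = b := by
  rw [map_add, bproj_of_mem ha, bproj_of_mem hb, if_neg (by norm_num), if_pos le_rfl, zero_add]

end Bigraded

structure IsFirstQuadrantBigraded (𝒞 : ℤ × ℤ → Submodule R M) (D21 D10 D01 : M →ₗ[R] M) :
    Prop where
  eq_bot : ∀ p q : ℤ, p < 0 ∨ q < 0 → 𝒞 (p, q) = ⊥
  map_d21_le : ∀ p q : ℤ, (𝒞 (p, q)).map D21 ≤ 𝒞 (p + 2, q - 1)
  map_d10_le : ∀ p q : ℤ, (𝒞 (p, q)).map D10 ≤ 𝒞 (p + 1, q)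
  map_d01_le : ∀ p q : ℤ, (𝒞 (p, q)).map D01 ≤ 𝒞 (p, q + 1)

/-- `ker ρ₁ ⊆ A¹`, with `α` playing the role of `α_Y`. -/
def kerRho (𝒞 : ℤ × ℤ → Submodule R M) (D21 D10 D01 : M →ₗ[R] M) : Set M :=
  {Y : M | Y ∈ 𝒞 (0, 1) ∧ D01 Y = 0 ∧ ∃ α ∈ 𝒞 (1, 0), D01 α + D10 Y = 0 ∧
    D21 Y + D10 α ∈ Submodule.map D10 (𝒞 (1, 0) ⊓ LinearMap.ker D01)}

namespace IsFirstQuadrantBigraded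

variable {𝒞 : ℤ × ℤ → Submodule R M} {D21 D10 D01 : M →ₗ[R] M} {p q p' q' : ℤ} {x : M}

theorem d21_mem (hC : IsFirstQuadrantBigraded 𝒞 D21 D10 D01) (hx : x ∈ 𝒞 (p, q))
    (hp : p + 2 = p' := by norm_num) (hq : q - 1 = q' := by norm_num) : D21 x ∈ 𝒞 (p', q') :=
  hp ▸ hq ▸ hC.map_d21_le p q (Submodule.mem_map_of_mem hx)

theorem d10_mem (hC : IsFirstQuadrantBigraded 𝒞 D21 D10 D01) (hx : x ∈ 𝒞 (p, q))
    (hp : p + 1 = p' := by norm_num) : D10 x ∈ 𝒞 (p', q) :=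
  hp ▸ hC.map_d10_le p q (Submodule.mem_map_of_mem hx)

theorem d01_mem (hC : IsFirstQuadrantBigraded 𝒞 D21 D10 D01) (hx : x ∈ 𝒞 (p, q))
    (hq : q + 1 = q' := by norm_num) : D01 x ∈ 𝒞 (p, q') :=
  hq ▸ hC.map_d01_le p q (Submodule.mem_map_of_mem hx)

theorem d21_eq_zero (hC : IsFirstQuadrantBigraded 𝒞 D21 D10 D01) (hx : x ∈ 𝒞 (p, 0)) :
    D21 x = 0 := by
  simpa [hC.eq_bot (p + 2) (-1) (Or.inr (by norm_num))] using hC.d21_mem hx rfl rfl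

theorem apply_of_mem_zero_zero (hC : IsFirstQuadrantBigraded 𝒞 D21 D10 D01) {w : M}
    (hw : w ∈ 𝒞 (0, 0)) : (D21 + D10 + D01) w = D10 w + D01 w := by
  rw [LinearMap.add_apply, LinearMap.add_apply, hC.d21_eq_zero hw, zero_add]

theorem mem_boundaries_of_mem_null (hC : IsFirstQuadrantBigraded 𝒞 D21 D10 D01)
    (hx : x ∈ (𝒞 (0, 0) ⊓ LinearMap.ker D01).map D10) :
    x ∈ (bdeg 𝒞 0).map (D21 + D10 + D01) := by
  obtain ⟨w, ⟨hw, hw01⟩, rfl⟩ := hx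
  refine ⟨w, (bdeg_zero hC.eq_bot).ge hw, ?_⟩
  rw [hC.apply_of_mem_zero_zero hw, LinearMap.mem_ker.1 hw01, add_zero]

variable [Decomposition 𝒞]

theorem apply_add_eq_zero_iff (hC : IsFirstQuadrantBigraded 𝒞 D21 D10 D01) {a b : M}
    (ha : a ∈ 𝒞 (1, 0)) (hb : b ∈ 𝒞 (0, 1)) :
    (D21 + D10 + D01) (a + b) = 0 ↔ D21 b + D10 a = 0 ∧ D01 a + D10 b = 0 ∧ D01 b = 0 := by
  have hsplit : (D21 + D10 + D01) (a + b) = (D21 b + D10 a) + (D01 a + D10 b) + D01 b := by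
    simp only [LinearMap.add_apply, map_add, hC.d21_eq_zero ha]
    abel
  rw [hsplit]
  exact add_add_eq_zero_iff_of_mem 𝒞 (i := (2, 0)) (j := (1, 1)) (k := (0, 2))
    (by decide) (by decide) (by decide) (add_mem (hC.d21_mem hb) (hC.d10_mem ha))
    (add_mem (hC.d01_mem ha) (hC.d10_mem hb)) (hC.d01_mem hb)

theorem add_mem_cycles_iff (hC : IsFirstQuadrantBigraded 𝒞 D21 D10 D01) {a b : M}
    (ha : a ∈ 𝒞 (1, 0)) (hb : b ∈ 𝒞 (0, 1)) :
    a + b ∈ bdeg 𝒞 1 ⊓ LinearMap.ker (D21 + D10 + D01) ↔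
      D21 b + D10 a = 0 ∧ D01 a + D10 b = 0 ∧ D01 b = 0 := by
  rw [Submodule.mem_inf, LinearMap.mem_ker, hC.apply_add_eq_zero_iff ha hb, bdeg_one hC.eq_bot]
  exact and_iff_right (Submodule.add_mem_sup ha hb)

theorem sq_eq_zero_on_zero_zero (hC : IsFirstQuadrantBigraded 𝒞 D21 D10 D01)
    (hD : (D21 + D10 + D01) ∘ₗ (D21 + D10 + D01) = 0) {w : M} (hw : w ∈ 𝒞 (0, 0)) :
    D21 (D01 w) + D10 (D10 w) = 0 ∧ D01 (D10 w) + D10 (D01 w) = 0 := by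
  have hDDw : (D21 + D10 + D01) (D10 w + D01 w) = 0 := by
    rw [← hC.apply_of_mem_zero_zero hw]
    exact LinearMap.congr_fun hD w
  obtain ⟨h₁, h₂, -⟩ := (hC.apply_add_eq_zero_iff (hC.d10_mem hw) (hC.d01_mem hw)).1 hDDw
  exact ⟨h₁, h₂⟩

theorem mem_cycles_of_mem_null (hC : IsFirstQuadrantBigraded 𝒞 D21 D10 D01)
    (hx : x ∈ 𝒞 (1, 0) ⊓ LinearMap.ker D10 ⊓ LinearMap.ker D01) :
    x ∈ bdeg 𝒞 1 ⊓ LinearMap.ker (D21 + D10 + D01) := by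
  obtain ⟨⟨hx, h10⟩, h01⟩ := hx
  simpa using (hC.add_mem_cycles_iff hx (zero_mem _)).2
    ⟨by simpa using h10, by simpa using h01, map_zero _⟩

theorem bproj_mem_kerRho (hC : IsFirstQuadrantBigraded 𝒞 D21 D10 D01)
    (hx : x ∈ bdeg 𝒞 1 ⊓ LinearMap.ker (D21 + D10 + D01)) :
    bproj 𝒞 1 x ∈ kerRho 𝒞 D21 D10 D01 := by
  obtain ⟨a, ha, b, hb, rfl⟩ := exists_add_of_mem_bdeg_one hC.eq_bot hx.1
  obtain ⟨h₁, h₂, h₃⟩ := (hC.add_mem_cycles_iff ha hb).1 hx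
  rw [bproj_one_add ha hb]
  exact ⟨hb, h₃, a, ha, h₂, h₁ ▸ zero_mem _⟩

theorem bproj_mem_of_mem_boundaries (hC : IsFirstQuadrantBigraded 𝒞 D21 D10 D01)
    (hx : x ∈ (bdeg 𝒞 0).map (D21 + D10 + D01)) : bproj 𝒞 1 x ∈ (𝒞 (0, 0)).map D01 := by
  obtain ⟨w, hw, rfl⟩ := hx
  rw [bdeg_zero hC.eq_bot] at hw
  rw [hC.apply_of_mem_zero_zero hw, bproj_one_add (hC.d10_mem hw) (hC.d01_mem hw)]
  exact Submodule.mem_map_of_mem hw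

theorem mem_null_boundaries_of_mem_boundaries (hC : IsFirstQuadrantBigraded 𝒞 D21 D10 D01) (hx : x ∈ 𝒞 (1, 0))
    (hB : x ∈ (bdeg 𝒞 0).map (D21 + D10 + D01)) : x ∈ (𝒞 (0, 0) ⊓ LinearMap.ker D01).map D10 := by
  obtain ⟨w, hw, rfl⟩ := hB
  rw [bdeg_zero hC.eq_bot] at hw
  rw [hC.apply_of_mem_zero_zero hw] at hx ⊢
  have h01 : D01 w = 0 := eq_zero_of_mem_of_mem 𝒞 (i := (1, 0)) (j := (0, 1)) (by decide)
    (by simpa using sub_mem hx (hC.d10_mem hw)) (hC.d01_mem hw)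
  exact ⟨w, ⟨hw, h01⟩, by rw [h01, add_zero]⟩

theorem exists_mem_cycles_bproj_eq (hC : IsFirstQuadrantBigraded 𝒞 D21 D10 D01) {y : M}
    (hy : y ∈ kerRho 𝒞 D21 D10 D01) :
    ∃ x ∈ bdeg 𝒞 1 ⊓ LinearMap.ker (D21 + D10 + D01), bproj 𝒞 1 x = y := by
  obtain ⟨hy, hy01, α, hα, h₂, β, ⟨hβ, hβ01⟩, hβα⟩ := hy
  -- `D₁₀ β = D₂₁ y + D₁₀ α` with `D₀₁ β = 0`, so replacing `α` by `α - β` kills the obstruction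
  refine ⟨α - β + y, (hC.add_mem_cycles_iff (sub_mem hα hβ) hy).2 ⟨?_, ?_, hy01⟩,
    bproj_one_add (sub_mem hα hβ) hy⟩
  · rw [map_sub, hβα]
    abel
  · rw [map_sub, LinearMap.mem_ker.1 hβ01, sub_zero, h₂]

theorem exists_mem_null_sub_mem_boundaries (hC : IsFirstQuadrantBigraded 𝒞 D21 D10 D01)
    (hD : (D21 + D10 + D01) ∘ₗ (D21 + D10 + D01) = 0)
    (hx : x ∈ bdeg 𝒞 1 ⊓ LinearMap.ker (D21 + D10 + D01))
    (hπ : bproj 𝒞 1 x ∈ (𝒞 (0, 0)).map D01) :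
    ∃ x' ∈ 𝒞 (1, 0) ⊓ LinearMap.ker D10 ⊓ LinearMap.ker D01,
      x' - x ∈ (bdeg 𝒞 0).map (D21 + D10 + D01) := by
  obtain ⟨a, ha, b, hb, rfl⟩ := exists_add_of_mem_bdeg_one hC.eq_bot hx.1
  obtain ⟨h₁, h₂, -⟩ := (hC.add_mem_cycles_iff ha hb).1 hx
  rw [bproj_one_add ha hb] at hπ
  obtain ⟨w, hw, rfl⟩ := hπ
  obtain ⟨d₁, d₂⟩ := hC.sq_eq_zero_on_zero_zero hD hw
  refine ⟨a - D10 w, Submodule.mem_inf.2 ⟨Submodule.mem_inf.2 ⟨sub_mem ha (hC.d10_mem hw),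
    LinearMap.mem_ker.2 ?_⟩, LinearMap.mem_ker.2 ?_⟩, -w, (bdeg_zero hC.eq_bot).ge (neg_mem hw), ?_⟩
  · rw [map_sub, eq_neg_of_add_eq_zero_right d₁, eq_neg_of_add_eq_zero_right h₁,
      sub_neg_eq_add, neg_add_cancel]
  · rw [map_sub, eq_neg_of_add_eq_zero_left d₂, eq_neg_of_add_eq_zero_left h₂,
      sub_neg_eq_add, neg_add_cancel]
  · rw [map_neg, hC.apply_of_mem_zero_zero hw]
    abel

end IsFirstQuadrantBigraded

theorem statement14
    (𝒞 : ℤ × ℤ → Submodule R M) [DirectSum.Decomposition 𝒞]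
    (hfq : ∀ p q : ℤ, p < 0 ∨ q < 0 → 𝒞 (p, q) = ⊥)
    (D21 D10 D01 : M →ₗ[R] M)
    (h21 : ∀ p q : ℤ, (𝒞 (p, q)).map D21 ≤ 𝒞 (p + 2, q - 1))
    (h10 : ∀ p q : ℤ, (𝒞 (p, q)).map D10 ≤ 𝒞 (p + 1, q))
    (h01 : ∀ p q : ℤ, (𝒞 (p, q)).map D01 ≤ 𝒞 (p, q + 1))
    (D : M →ₗ[R] M) (hDdef : D = D21 + D10 + D01) (hD : D ∘ₗ D = 0)
    (BN1 : Submodule R M) (hBN1 : BN1 = Submodule.map D10 (𝒞 (0, 0) ⊓ LinearMap.ker D01))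
    (Bcol : Submodule R M) (hBcol : Bcol = Submodule.map D01 (𝒞 (0, 0)))
    (B1 : Submodule R M) (hB1 : B1 = Submodule.map D (bdeg 𝒞 0))
    (ZN1 : Submodule R M) (hZN1 : ZN1 = 𝒞 (1, 0) ⊓ LinearMap.ker D10 ⊓ LinearMap.ker D01)
    (Z1 : Submodule R M) (hZ1 : Z1 = bdeg 𝒞 1 ⊓ LinearMap.ker D)
    -- `ker ρ₁`, described explicitly
    (Kρ : Submodule R M)
    (hKρ : (Kρ : Set M) = {Y : M | Y ∈ 𝒞 (0, 1) ∧ D01 Y = 0 ∧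
      ∃ α ∈ 𝒞 (1, 0), D01 α + D10 Y = 0 ∧
        D21 Y + D10 α ∈ Submodule.map D10 (𝒞 (1, 0) ⊓ LinearMap.ker D01)}) :
    -- there is a short exact sequence
    -- `0 → H¹(N₀,D̄) → H¹(C,D) → ker ρ₁ / B¹(C^{0,•},D_{0,1}) → 0`
    ∃ (f : (↥ZN1 ⧸ Submodule.comap ZN1.subtype BN1) →ₗ[R]
        (↥Z1 ⧸ Submodule.comap Z1.subtype B1))
      (g : (↥Z1 ⧸ Submodule.comap Z1.subtype B1) →ₗ[R]
        (↥Kρ ⧸ Submodule.comap Kρ.subtype Bcol)),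
      Function.Injective f ∧ Function.Surjective g ∧
      LinearMap.range f = LinearMap.ker g ∧
      -- `f` is induced by the inclusion `N₀ ↪ C`
      (∀ (x : M) (hx : x ∈ ZN1) (hx' : x ∈ Z1),
        f (Submodule.Quotient.mk ⟨x, hx⟩) = Submodule.Quotient.mk ⟨x, hx'⟩) ∧
      -- `g` is induced by the projection `π₁` onto the (0,1)-component
      (∀ (x : M) (hx : x ∈ Z1) (hx' : bproj 𝒞 1 x ∈ Kρ),
        g (Submodule.Quotient.mk ⟨x, hx⟩) =
          Submodule.Quotient.mk ⟨bproj 𝒞 1 x, hx'⟩) := by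
  subst hDdef hBN1 hBcol hB1 hZN1 hZ1
  have hC : IsFirstQuadrantBigraded 𝒞 D21 D10 D01 := ⟨hfq, h21, h10, h01⟩
  have hK : ∀ y, y ∈ Kρ ↔ y ∈ kerRho 𝒞 D21 D10 D01 := fun y => by
    rw [← SetLike.mem_coe, hKρ]
    rfl
  have hZN : ∀ x ∈ 𝒞 (1, 0) ⊓ LinearMap.ker D10 ⊓ LinearMap.ker D01,
      x ∈ bdeg 𝒞 1 ⊓ LinearMap.ker (D21 + D10 + D01) :=
    fun _ => hC.mem_cycles_of_mem_null
  have hBN : ∀ x ∈ (𝒞 (0, 0) ⊓ LinearMap.ker D01).map D10,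
      x ∈ (bdeg 𝒞 0).map (D21 + D10 + D01) :=
    fun _ => hC.mem_boundaries_of_mem_null
  have hπZ : ∀ x ∈ bdeg 𝒞 1 ⊓ LinearMap.ker (D21 + D10 + D01), bproj 𝒞 1 x ∈ Kρ :=
    fun _ hx => (hK _).2 (hC.bproj_mem_kerRho hx)
  have hπB : ∀ x ∈ (bdeg 𝒞 0).map (D21 + D10 + D01), bproj 𝒞 1 x ∈ (𝒞 (0, 0)).map D01 :=
    fun _ => hC.bproj_mem_of_mem_boundaries
  have hπZN : ∀ x ∈ 𝒞 (1, 0) ⊓ LinearMap.ker D10 ⊓ LinearMap.ker D01,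
      bproj 𝒞 1 x ∈ (𝒞 (0, 0)).map D01 := fun x hx => by
    rw [bproj_of_mem hx.1.1, if_neg (by norm_num)]
    exact zero_mem _
  refine ⟨subquotientMap (R := R) LinearMap.id hZN hBN, subquotientMap (bproj 𝒞 1) hπZ hπB,
    subquotientMap_injective _ _ fun _ hx => hC.mem_null_boundaries_of_mem_boundaries hx.1.1,
    subquotientMap_surjective _ _ fun y hy => hC.exists_mem_cycles_bproj_eq ((hK y).1 hy),
    range_subquotientMap_eq_ker _ _ _ _ hπZN fun _ => hC.exists_mem_null_sub_mem_boundaries hD,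
    fun _ _ _ => rfl, fun _ _ _ => rfl⟩
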